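/- Let 𝔐 be a class of preference models and ★ a dynamic operator closed over 𝔐. The schema [★φ][<](¬φ → ξ) → (φ → [<][★φ](¬φ → ξ)) is valid in ⟨𝔐, ★⟩ for all φ ∈ L_0 and ξ ∈ L_≤(★) if and only if ★ is 𝔐-CR3-compliant. -/

import Mathlib

inductive PForm (P : Type) : Type
  | atom : P → PForm P
  | neg  : PForm P → PForm P
  | and  : PForm P → PForm P → PForm P

inductive DForm (P : Type) : Type
  | atom  : P → DForm P
  | neg   : DForm P → DForm P
  | and   : DForm P → DForm P → DForm P
  | all   : DForm P → DForm P
  | boxLe : DForm P → DForm P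
  | boxLt : DForm P → DForm P
  | dyn   : PForm P → DForm P → DForm P

structure PrefModel (P : Type) where
  W : Type
  le : W → W → Prop
  refl : ∀ w, le w w
  trans : ∀ w₁ w₂ w₃, le w₁ w₂ → le w₂ w₃ → le w₁ w₃
  wf : WellFounded (fun w w' => le w w' ∧ ¬ le w' w)
  val : P → Set W

namespace PrefModel
variable {P : Type}
def lt (M : PrefModel P) (w w' : M.W) : Prop := M.le w w' ∧ ¬ M.le w' w
def Min (M : PrefModel P) (S : Set M.W) : Set M.W :=
  {w | w ∈ S ∧ ¬ ∃ w' ∈ S, M.le w' w ∧ ¬ M.le w w'}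
end PrefModel

def psat {P : Type} (M : PrefModel P) : PForm P → M.W → Prop
  | .atom p, w => w ∈ M.val p
  | .neg φ, w => ¬ psat M φ w
  | .and φ ψ, w => psat M φ w ∧ psat M ψ w

def pext {P : Type} (M : PrefModel P) (φ : PForm P) : Set M.W := {w | psat M φ w}

structure DynOp (P : Type) where
  rel : (M : PrefModel P) → PForm P → M.W → M.W → Prop
  refl : ∀ M φ w, rel M φ w w
  trans : ∀ M φ w₁ w₂ w₃, rel M φ w₁ w₂ → rel M φ w₂ w₃ → rel M φ w₁ w₃
  wf : ∀ M φ, WellFounded (fun w w' => rel M φ w w' ∧ ¬ rel M φ w' w)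

def DynOp.apply {P : Type} (s : DynOp P) (M : PrefModel P) (φ : PForm P) : PrefModel P where
  W := M.W
  le := s.rel M φ
  refl := s.refl M φ
  trans := s.trans M φ
  wf := s.wf M φ
  val := M.val

def DynOp.srel {P : Type} (s : DynOp P) (M : PrefModel P) (φ : PForm P) (w w' : M.W) : Prop :=
  s.rel M φ w w' ∧ ¬ s.rel M φ w' w

def PForm.toD {P : Type} : PForm P → DForm P
  | .atom p => .atom p
  | .neg φ => .neg φ.toD
  | .and φ ψ => .and φ.toD ψ.toD

namespace DForm
variable {P : Type}
def imp (ξ ψ : DForm P) : DForm P := .neg (.and ξ (.neg ψ))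
def iff (ξ ψ : DForm P) : DForm P := .and (imp ξ ψ) (imp ψ ξ)
def or (ξ ψ : DForm P) : DForm P := .neg (.and (.neg ξ) (.neg ψ))
def exi (ξ : DForm P) : DForm P := .neg (.all (.neg ξ))
def diaLt (ξ : DForm P) : DForm P := .neg (.boxLt (.neg ξ))
def mu (ξ : DForm P) : DForm P := .and ξ (.neg (diaLt ξ))
def bel (ψ χ : DForm P) : DForm P := .all (imp (mu χ) ψ)
end DForm

def dsat {P : Type} (s : DynOp P) : DForm P → (M : PrefModel P) → M.W → Prop
  | .atom p, M, w => w ∈ M.val p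
  | .neg ξ, M, w => ¬ dsat s ξ M w
  | .and ξ₁ ξ₂, M, w => dsat s ξ₁ M w ∧ dsat s ξ₂ M w
  | .all ξ, M, _ => ∀ w', dsat s ξ M w'
  | .boxLe ξ, M, w => ∀ w', M.le w' w → dsat s ξ M w'
  | .boxLt ξ, M, w => ∀ w', M.lt w' w → dsat s ξ M w'
  | .dyn φ ξ, M, w => dsat s ξ (s.apply M φ) w

def ClosedOver {P : Type} (s : DynOp P) (𝔐 : Set (PrefModel P)) : Prop :=
  ∀ M ∈ 𝔐, ∀ φ : PForm P, s.apply M φ ∈ 𝔐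

/-- `★` is `𝔐`-CR3-compliant. -/
def CR3Compliant {P : Type} (s : DynOp P) (𝔐 : Set (PrefModel P)) : Prop :=
  ∀ M ∈ 𝔐, ∀ (φ : PForm P) (w w' : M.W),
    ¬ psat M φ w → psat M φ w' → M.lt w w' →
      ∀ ξ : DForm P, dsat s (.dyn φ ξ) M w →
        ∃ w'' : M.W, ¬ psat M φ w'' ∧ dsat s (.dyn φ ξ) M w'' ∧ s.srel M φ w'' w'

/-!
Read semantically at a φ-world `w`, the schema says: if every ¬φ-world strictly below `w` in the
upgraded order satisfies `[★φ]ξ`, then so does every ¬φ-world strictly below `w` in the original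
order. Instantiated at `¬ξ`, this is exactly the contrapositive of CR3a, and conversely CR3a applied
to `¬ξ` yields each instance of the schema.
-/

namespace DynOp

variable {P : Type} (s : DynOp P) (M : PrefModel P) (φ : PForm P)

@[simp]
lemma apply_lt : (s.apply M φ).lt = s.srel M φ := rfl

@[simp]
lemma psat_apply (ψ : PForm P) (w : (s.apply M φ).W) : psat (s.apply M φ) ψ w ↔ psat M ψ w := by
  induction ψ with
  | atom p => rfl
  | neg χ ih => simp only [psat, ih]
  | and χ₁ χ₂ ih₁ ih₂ => simp only [psat, ih₁, ih₂]

end DynOp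

section Semantics

variable {P : Type} (s : DynOp P)

@[simp]
lemma dsat_toD (ψ : PForm P) (M : PrefModel P) (w : M.W) : dsat s ψ.toD M w ↔ psat M ψ w := by
  induction ψ with
  | atom p => rfl
  | neg χ ih => simp only [PForm.toD, dsat, psat, ih]
  | and χ₁ χ₂ ih₁ ih₂ => simp only [PForm.toD, dsat, psat, ih₁, ih₂]

@[simp]
lemma dsat_imp (ξ ψ : DForm P) (M : PrefModel P) (w : M.W) :
    dsat s (ξ.imp ψ) M w ↔ (dsat s ξ M w → dsat s ψ M w) := by
  simp only [DForm.imp, dsat, not_and, not_not]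

@[simp]
lemma dsat_apply_neg_imp (φ ψ : PForm P) (ξ : DForm P) (M : PrefModel P) (w : M.W) :
    dsat s ((DForm.neg ψ.toD).imp ξ) (s.apply M φ) w ↔
      (¬ psat M ψ w → dsat s ξ (s.apply M φ) w) := by
  rw [dsat_imp (M := s.apply M φ) (w := w)]
  simp only [dsat]
  rw [dsat_toD s ψ (s.apply M φ) w, DynOp.psat_apply s M φ ψ w]

lemma dsat_cr3Schema_iff (φ : PForm P) (ξ : DForm P) (M : PrefModel P) (w : M.W) :
    dsat s ((DForm.dyn φ (.boxLt ((DForm.neg φ.toD).imp ξ))).imp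
        (φ.toD.imp (.boxLt (.dyn φ ((DForm.neg φ.toD).imp ξ))))) M w ↔
      ((∀ u, s.srel M φ u w → ¬ psat M φ u → dsat s ξ (s.apply M φ) u) → psat M φ w →
        ∀ u, M.lt u w → ¬ psat M φ u → dsat s ξ (s.apply M φ) u) := by
  simp only [dsat_imp, dsat, dsat_toD, DynOp.psat_apply, DynOp.apply_lt, dsat_apply_neg_imp]
  -- the two sides differ only in a binder type, `(s.apply M φ).W` versus `M.W`
  exact Iff.rfl

end Semantics

theorem cr3_compliance_characterisation_general {P : Type}
    (𝔐 : Set (PrefModel P)) (s : DynOp P) :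
    (∀ (φ : PForm P) (ξ : DForm P), ∀ M ∈ 𝔐, ∀ w : M.W,
      dsat s ((DForm.dyn φ (.boxLt ((DForm.neg φ.toD).imp ξ))).imp
        (φ.toD.imp (.boxLt (.dyn φ ((DForm.neg φ.toD).imp ξ))))) M w) ↔
      CR3Compliant s 𝔐 := by
  simp only [dsat_cr3Schema_iff]
  constructor
  · intro hschema M hM φ w w' hw hw' hlt ξ hξ
    by_contra! hno
    exact hschema φ (.neg ξ) M hM w' (fun u hu hu' hξu => hno u hu' hξu hu) hw' w hlt hw hξ
  · intro hcr3 φ ξ M hM w hbox hw u hlt hu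
    by_contra hξ
    obtain ⟨w'', hw'', hξ'', hrel⟩ := hcr3 M hM φ u w hu hw hlt (.neg ξ) hξ
    exact hξ'' (hbox w'' hrel hw'')

theorem cr3_compliance_characterisation {P : Type}
    (𝔐 : Set (PrefModel P)) (s : DynOp P) (hclosed : ClosedOver s 𝔐) :
    (∀ (φ : PForm P) (ξ : DForm P), ∀ M ∈ 𝔐, ∀ w : M.W,
      dsat s ((DForm.dyn φ (.boxLt ((DForm.neg φ.toD).imp ξ))).imp
        (φ.toD.imp (.boxLt (.dyn φ ((DForm.neg φ.toD).imp ξ))))) M w) ↔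
      CR3Compliant s 𝔐 :=
  cr3_compliance_characterisation_general 𝔐 s
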